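/- For the κ–μ SNR density f, the moment generating function satisfies ∫₀^∞ e^{sx} f(x) dx = (μ(1+κ)/(μ(1+κ) − γ̄ s))^μ exp( μκ γ̄ s / (μ(1+κ) − γ̄ s) ) for all real s < μ(1+κ)/γ̄. -/

import Mathlib

/-!
Substituting the power series of `I_{μ-1}` turns `e^{sx} f(x)` into a series of Gamma kernels
`x^(k+μ-1) e^{-(A-s)x}`, where `A = μ(1+κ)/γ̄`. These integrate to factorials which cancel those
of the Bessel coefficients, and the series of integrals (absolutely convergent, which justifies the
interchange) is the exponential series of `t/(A-s)` with `t = μκA`.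
-/

open Real MeasureTheory

/-- Modified Bessel function of the first kind of integer order `n`. -/
noncomputable def besselI (n : ℤ) (x : ℝ) : ℝ :=
  ∑' k : ℕ, (x / 2) ^ (2 * k + n.natAbs) /
    ((Nat.factorial k : ℝ) * (Nat.factorial (k + n.natAbs) : ℝ))

open Set Nat

lemma integrableOn_pow_mul_exp_neg_mul_Ioi (n : ℕ) {b : ℝ} (hb : 0 < b) :
    IntegrableOn (fun x : ℝ => x ^ n * exp (-(b * x))) (Ioi 0) := by
  refine (integrableOn_rpow_mul_exp_neg_mul_rpow (s := n) (p := 1)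
    (by linarith [(n.cast_nonneg : (0:ℝ) ≤ n)]) one_pos hb).congr_fun (fun x _ => ?_)
    measurableSet_Ioi
  simp [rpow_natCast]

lemma integral_pow_mul_exp_neg_mul_Ioi (n : ℕ) {b : ℝ} (hb : 0 < b) :
    ∫ x in Ioi (0:ℝ), x ^ n * exp (-(b * x)) = n ! / b ^ (n + 1) := by
  have h := integral_rpow_mul_exp_neg_mul_Ioi (a := n + 1) (by positivity) hb
  simp only [add_sub_cancel_right, rpow_natCast, Gamma_nat_eq_factorial] at h
  rw [h, ← Nat.cast_succ, rpow_natCast, one_div, inv_pow, inv_mul_eq_div]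

lemma integral_tsum_pow_mul_exp_neg_mul_Ioi (m : ℕ) (a : ℝ) {b : ℝ} (hb : 0 < b) :
    ∫ x in Ioi (0:ℝ), ∑' k : ℕ, a ^ k / (k ! * (k + m) !) * (x ^ (k + m) * exp (-(b * x))) =
      exp (a / b) / b ^ (m + 1) := by
  have hterm : ∀ (c : ℝ) (k : ℕ),
      ∫ x in Ioi (0:ℝ), c / (k ! * (k + m) !) * (x ^ (k + m) * exp (-(b * x))) =
        c / b ^ k / k ! / b ^ (m + 1) := by
    intro c k
    rw [integral_const_mul, integral_pow_mul_exp_neg_mul_Ioi _ hb]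
    field_simp
    ring
  have hnorm : ∀ k : ℕ,
      ∫ x in Ioi (0:ℝ), ‖a ^ k / (k ! * (k + m) !) * (x ^ (k + m) * exp (-(b * x)))‖ =
        (|a| / b) ^ k / k ! / b ^ (m + 1) := by
    intro k
    rw [div_pow, ← hterm]
    refine setIntegral_congr_fun measurableSet_Ioi fun x (hx : 0 < x) => ?_
    rw [norm_mul, norm_div, norm_pow, Real.norm_eq_abs, Real.norm_of_nonneg (by positivity),
      Real.norm_of_nonneg (by positivity)]
  rw [← integral_tsum_of_summable_integral_norm
    (fun k => (integrableOn_pow_mul_exp_neg_mul_Ioi _ hb).const_mul _) ?_]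
  · simp_rw [hterm, ← div_pow]
    rw [tsum_div_const, exp_eq_exp_ℝ, NormedSpace.exp_eq_tsum_div]
  · simp_rw [hnorm]
    exact (Real.summable_pow_div_factorial _).div_const _

lemma besselI_two_mul_sqrt (m : ℕ) {y : ℝ} (hy : 0 ≤ y) :
    besselI m (2 * √y) = √y ^ m * ∑' k : ℕ, y ^ k / (k ! * (k + m) !) := by
  rw [besselI, Int.natAbs_natCast, ← tsum_mul_left]
  refine tsum_congr fun k => ?_
  rw [mul_div_cancel_left₀ _ two_ne_zero, pow_add, pow_mul, sq_sqrt hy]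
  ring

lemma integral_sqrt_pow_mul_exp_neg_mul_besselI (m : ℕ) {t b : ℝ} (ht : 0 ≤ t) (hb : 0 < b) :
    ∫ x in Ioi (0:ℝ), √x ^ m * exp (-(b * x)) * besselI m (2 * √(t * x)) =
      √t ^ m * exp (t / b) / b ^ (m + 1) := by
  have hseries : ∀ x ∈ Ioi (0:ℝ), √x ^ m * exp (-(b * x)) * besselI m (2 * √(t * x)) =
      √t ^ m * ∑' k : ℕ, t ^ k / (k ! * (k + m) !) * (x ^ (k + m) * exp (-(b * x))) := by
    intro x (hx : 0 < x)
    rw [besselI_two_mul_sqrt m (by positivity), sqrt_mul ht, ← tsum_mul_left, ← tsum_mul_left,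
      ← tsum_mul_left]
    refine tsum_congr fun k => ?_
    have hx2 : √x ^ m * √x ^ m = x ^ m := by rw [← mul_pow, mul_self_sqrt hx.le]
    rw [pow_add, mul_pow, ← hx2]
    ring
  rw [setIntegral_congr_fun measurableSet_Ioi hseries, integral_const_mul,
    integral_tsum_pow_mul_exp_neg_mul_Ioi m t hb, mul_div_assoc]

noncomputable def kappaMuDensity (μ : ℕ) (κ γbar x : ℝ) : ℝ :=
  ((μ : ℝ) * (1 + κ) ^ (((μ : ℝ) + 1) / 2) / (γbar * Real.exp ((μ : ℝ) * κ))) *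
    (x / (γbar * κ)) ^ (((μ : ℝ) - 1) / 2) *
    Real.exp (-(μ : ℝ) * (1 + κ) * x / γbar) *
    besselI ((μ : ℤ) - 1) (2 * (μ : ℝ) * Real.sqrt (κ * (1 + κ) * x / γbar))

lemma kappaMuDensity_eq {m : ℕ} {κ γbar A x : ℝ} (hκ : 0 < κ) (hγ : 0 < γbar)
    (hA : A = (m + 1) * (1 + κ) / γbar) (hx : 0 < x) :
    kappaMuDensity (m + 1) κ γbar x =
      A ^ (m + 1) / exp ((m + 1) * κ) / √((m + 1) * κ * A) ^ m *
        (√x ^ m * exp (-(A * x)) * besselI m (2 * √((m + 1) * κ * A * x))) := by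
  subst hA
  set A := (m + 1) * (1 + κ) / γbar
  set t := (m + 1) * κ * A
  obtain ⟨g, hg, rfl⟩ : ∃ g, 0 < g ∧ γbar = g ^ 2 := ⟨√γbar, sqrt_pos.2 hγ, (sq_sqrt hγ.le).symm⟩
  have hκ1 : 0 ≤ 1 + κ := by linarith
  have hindex : ((m + 1 : ℕ) : ℤ) - 1 = m := by push_cast; ring
  have hpow1 : (1 + κ) ^ ((((m + 1 : ℕ) : ℝ) + 1) / 2) = √(1 + κ) ^ (m + 2) := by
    rw [show ((m + 1 : ℕ) : ℝ) + 1 = ((m + 2 : ℕ) : ℝ) by push_cast; ring,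
      rpow_div_two_eq_sqrt _ hκ1, rpow_natCast]
  have hpow2 : (x / (g ^ 2 * κ)) ^ ((((m + 1 : ℕ) : ℝ) - 1) / 2) = (√x / (g * √κ)) ^ m := by
    rw [show ((m + 1 : ℕ) : ℝ) - 1 = m by push_cast; ring,
      rpow_div_two_eq_sqrt _ (by positivity), rpow_natCast, sqrt_div hx.le,
      sqrt_mul (sq_nonneg g), sqrt_sq hg.le]
  have hsqrt_t : √t = (m + 1) * √κ * √(1 + κ) / g := by
    rw [show t = ((m + 1) * √κ * √(1 + κ) / g) ^ 2 by
      simp only [t, A]; field_simp; rw [sq_sqrt hκ.le, sq_sqrt hκ1]]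
    exact sqrt_sq (by positivity)
  have hsqrt_tx : √(t * x) = (m + 1) * √(κ * (1 + κ) * x / g ^ 2) := by
    rw [show t * x = (m + 1) ^ 2 * (κ * (1 + κ) * x / g ^ 2) by simp only [t, A]; field_simp,
      sqrt_mul' _ (by positivity), sqrt_sq (by positivity)]
  have hexp : -((m + 1 : ℕ) : ℝ) * (1 + κ) * x / g ^ 2 = -(A * x) := by
    simp only [A]; push_cast; ring
  unfold kappaMuDensity
  rw [hindex, hpow1, hpow2, hsqrt_t, hsqrt_tx, hexp]
  push_cast
  rw [mul_assoc 2 ((m : ℝ) + 1)]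
  generalize besselI m _ = I
  have hq : 0 < √κ := sqrt_pos.2 hκ
  have hr : 0 < √(1 + κ) := sqrt_pos.2 (by linarith)
  have hr2 := sq_sqrt hκ1
  generalize √(1 + κ) = r at hr hr2 ⊢
  simp only [A, ← hr2, div_pow, mul_pow]
  field_simp
  ring

lemma integral_exp_mul_kappaMuDensity (m : ℕ) {κ γbar A s : ℝ} (hκ : 0 < κ) (hγ : 0 < γbar)
    (hA : A = (m + 1) * (1 + κ) / γbar) (hs : s < A) :
    ∫ x in Ioi (0:ℝ), exp (s * x) * kappaMuDensity (m + 1) κ γbar x =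
      (A / (A - s)) ^ (m + 1) * exp ((m + 1) * κ * s / (A - s)) := by
  have hA0 : 0 < A := by rw [hA]; positivity
  have hb : 0 < A - s := by linarith
  have ht : 0 < (m + 1) * κ * A := by positivity
  have hpoint : ∀ x ∈ Ioi (0:ℝ), exp (s * x) * kappaMuDensity (m + 1) κ γbar x =
      A ^ (m + 1) / exp ((m + 1) * κ) / √((m + 1) * κ * A) ^ m *
        (√x ^ m * exp (-((A - s) * x)) * besselI m (2 * √((m + 1) * κ * A * x))) := by
    intro x (hx : 0 < x)
    rw [kappaMuDensity_eq hκ hγ hA hx, show -((A - s) * x) = s * x + -(A * x) by ring, exp_add]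
    ring
  rw [setIntegral_congr_fun measurableSet_Ioi hpoint, integral_const_mul,
    integral_sqrt_pow_mul_exp_neg_mul_besselI m ht.le hb,
    show (m + 1) * κ * s / (A - s) = (m + 1) * κ * A / (A - s) - (m + 1) * κ by field_simp; ring,
    exp_sub, div_pow A]
  have : 0 < √((m + 1) * κ * A) := sqrt_pos.2 ht
  field_simp

theorem stmt_7 (μ : ℕ) (hμ : 1 ≤ μ) (κ γbar : ℝ) (hκ : 0 < κ) (hγ : 0 < γbar)
    (s : ℝ) (hs : s < (μ : ℝ) * (1 + κ) / γbar) :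
    ∫ x in Set.Ioi (0:ℝ),
      Real.exp (s * x) *
        (((μ : ℝ) * (1 + κ) ^ (((μ : ℝ) + 1) / 2) / (γbar * Real.exp ((μ : ℝ) * κ))) *
          (x / (γbar * κ)) ^ (((μ : ℝ) - 1) / 2) *
          Real.exp (-(μ : ℝ) * (1 + κ) * x / γbar) *
          besselI ((μ : ℤ) - 1) (2 * (μ : ℝ) * Real.sqrt (κ * (1 + κ) * x / γbar))) =
      ((μ : ℝ) * (1 + κ) / ((μ : ℝ) * (1 + κ) - γbar * s)) ^ μ *
        Real.exp ((μ : ℝ) * κ * γbar * s / ((μ : ℝ) * (1 + κ) - γbar * s)) := by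
  obtain ⟨m, rfl⟩ : ∃ m, μ = m + 1 := ⟨μ - 1, by omega⟩
  change ∫ x in Ioi (0:ℝ), exp (s * x) * kappaMuDensity (m + 1) κ γbar x = _
  push_cast at hs ⊢
  rw [integral_exp_mul_kappaMuDensity m hκ hγ rfl hs]
  congr 2
  · field_simp
  · field_simp
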